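/- In every execution of the online collaborative caching algorithm on a request sequence v_1, …, v_n (n ≥ 1), the total cost paid by the algorithm (caching cost plus UA cost) satisfies Σ_{w∈W, w≠r} f_w + Σ_{j=1}^n d(W_{v_j}, v_j) ≤ (4·log₂(n+1) + 2) · C*, where W is the final cache set, W_{v_j} is the cache set at the time request v_j is assigned, and C* := min over nonempty finite sets W* ⊆ X containing r of [ Σ_{w∈W*, w≠r} f_w + Σ_{j=1}^n d(W*, v_j) ] is the cost of the optimal offline solution. In other words, the online algorithm is (4·log₂(n+1)+2)-competitive. -/

import Mathlib

/-!
Every node's potential stays at most its caching cost: when request `i` lifts some potential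
above its cost, the maximizer `w` is opened, and by maximality the decrease `δ i` that `w`
brings to the UA distance of `v i` covers every node's excess. Hence, on arrival of request
`i`, each node `k` has potential at most `f k + δ i`. Opening `w` costs less than its
potential, i.e. less than the decrease `w` brings to the UA distances of all requests so far;
summed over time, these decreases on earlier requests telescope to at most the UA cost
`∑ a i` of the algorithm. So the algorithm pays at most `2 a i + min (δ i) (f k + d k (v i))`
per request, for any node `k`.

Against an optimal cache set, group the requests by their nearest optimal cache `k`. Each of
the first `j` requests of a group contributes, by the triangle inequality, to the potential of
`k` on arrival of the `j`-th one; this bounds the charge of the `j`-th request by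
`2 (f k + 2 A) / j + 3 d k (v i)`, `A` being the optimal UA cost of the group, and that of
the first one by `3 (f k + d k (v i))`. Summing over a group gives a harmonic sum, which is at
most `log₂ (n + 1)`.
-/

open Finset

/-- The setting of the online collaborative caching problem: a finite set `X` of nodes
(base stations together with the root `r` representing the Internet), a pseudometric
UA-cost `d` satisfying the triangle inequality, and nonnegative caching costs `f`
with `f r = 0` (the root always holds the content). -/
structure CachingSetting (X : Type*) [Fintype X] where
  d : X → X → ℝ
  f : X → ℝ
  r : X
  d_nonneg : ∀ x y, 0 ≤ d x y
  d_self : ∀ x, d x x = 0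
  d_symm : ∀ x y, d x y = d y x
  d_triangle : ∀ x y z, d x z ≤ d x y + d y z
  f_nonneg : ∀ k, 0 ≤ f k
  f_root : f r = 0

namespace CachingSetting

variable {X : Type*} [Fintype X] [DecidableEq X] (S : CachingSetting X)

/-- UA cost of serving a request at `v` from the nearest node of the cache set `W`:
`D W v = min_{k ∈ W} d k v`. -/
noncomputable def D (W : Finset X) (v : X) : ℝ :=
  if h : W.Nonempty then W.inf' h (fun k => S.d k v) else 0

/-- Potential of node `k` with respect to the cache set `W` and the first `j`
requests of the request sequence `v`:
`pot v W j k = ∑_{i < j} max(D W (v i) − d k (v i), 0)`. -/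
noncomputable def pot (v : ℕ → X) (W : Finset X) (j : ℕ) (k : X) : ℝ :=
  ∑ i ∈ Finset.range j, max (S.D W (v i) - S.d k (v i)) 0

/-- One step of the online algorithm on request `v i`, turning the cache set `W`
into `W'`.  After updating the potentials (they become the potentials with respect
to `W` and the first `i + 1` requests), either all potentials are at most the caching
costs and no new cache is opened, or the content is cached at a maximizer `w` of
`p(k) − f k` with `p(w) − f w > 0`. -/
def Step (v : ℕ → X) (i : ℕ) (W W' : Finset X) : Prop :=
  ((∀ k, S.pot v W (i + 1) k ≤ S.f k) ∧ W' = W) ∨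
    (∃ w, (∀ k, S.pot v W (i + 1) k - S.f k ≤ S.pot v W (i + 1) w - S.f w) ∧
      S.f w < S.pot v W (i + 1) w ∧ W' = insert w W)

/-- `IsExecution S n v Ws` says that `Ws j` is the cache set maintained by the online
algorithm after fully processing the first `j` of the `n` requests `v 0, v 1, …`
(initially the cache set is `{r}`); ties may be broken arbitrarily. -/
def IsExecution (n : ℕ) (v : ℕ → X) (Ws : ℕ → Finset X) : Prop :=
  Ws 0 = {S.r} ∧ ∀ i < n, S.Step v i (Ws i) (Ws (i + 1))

end CachingSetting

theorem Finset.sum_card_filter_le_eq_sum_range {α M : Type*} [LinearOrder α]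
    [AddCommMonoid M] (T : Finset α) (g : ℕ → M) :
    ∑ s ∈ T, g #{t ∈ T | t ≤ s} = ∑ j ∈ range #T, g (j + 1) := by
  induction T using Finset.induction_on_max with
  | empty => simp
  | insert a T hlt ih =>
    have ha : a ∉ T := fun h => lt_irrefl a (hlt a h)
    rw [sum_insert ha, card_insert_of_notMem ha, sum_range_succ, add_comm, ← ih]
    congr 1
    · refine sum_congr rfl fun s hs => ?_
      rw [filter_insert, if_neg (hlt s hs).not_ge]
    · rw [filter_true_of_mem fun t ht => ?_, card_insert_of_notMem ha]
      rcases mem_insert.1 ht with rfl | ht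
      exacts [le_rfl, (hlt t ht).le]

theorem sum_range_sum_range_sub {G : Type*} [AddCommGroup G] (u : ℕ → ℕ → G) (m : ℕ) :
    ∑ i ∈ range m, ∑ s ∈ range i, (u i s - u (i + 1) s) =
      ∑ s ∈ range m, (u (s + 1) s - u m s) := by
  induction m with
  | zero => simp
  | succ m ih =>
    rw [sum_range_succ, ih, ← sum_add_distrib, sum_range_succ _ m, sub_self, add_zero]
    exact sum_congr rfl fun s _ => sub_add_sub_cancel _ _ _

theorem one_div_le_logb_sub_logb (m : ℕ) :
    1 / ((m : ℝ) + 1) ≤ Real.logb 2 (m + 2) - Real.logb 2 (m + 1) := by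
  have hm : (0 : ℝ) < m + 1 := by positivity
  have hp : 1 / ((m : ℝ) + 1) ≤ 1 :=
    (div_le_one hm).2 (by linarith [m.cast_nonneg (α := ℝ)])
  -- `2 ^ t` lies below its chord on `[0, 1]`
  have hrpow : (2 : ℝ) ^ (1 / ((m : ℝ) + 1)) ≤ 1 + 1 / ((m : ℝ) + 1) := by
    simpa [one_add_one_eq_two] using
      rpow_one_add_le_one_add_mul_self (s := 1) (by norm_num) (by positivity) hp
  rw [← Real.logb_div (by positivity) hm.ne', Real.le_logb_iff_rpow_le one_lt_two
    (by positivity)]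
  calc (2 : ℝ) ^ (1 / ((m : ℝ) + 1)) ≤ 1 + 1 / ((m : ℝ) + 1) := hrpow
    _ = (m + 2) / (m + 1) := by field_simp; ring

theorem sum_range_one_div_le_logb (m : ℕ) :
    ∑ j ∈ range m, 1 / ((j : ℝ) + 1) ≤ Real.logb 2 (m + 1) := by
  calc ∑ j ∈ range m, 1 / ((j : ℝ) + 1)
      ≤ ∑ j ∈ range m, (Real.logb 2 ((j + 1 : ℕ) + 1) - Real.logb 2 ((j : ℕ) + 1)) :=
        sum_le_sum fun j _ => (one_div_le_logb_sub_logb j).trans_eq (by push_cast; ring_nf)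
    _ = Real.logb 2 (m + 1) := by
        rw [sum_range_sub (fun j : ℕ => Real.logb 2 ((j : ℝ) + 1))]; simp

/-- Bound on the charge of the `j`-th request, in arrival order, of a group served by one
cache of caching cost `f` at total UA cost `A`. -/
noncomputable def chargeBound (f A : ℝ) (j : ℕ) : ℝ :=
  if j = 1 then 3 * f else 2 * (f + 2 * A) / j

theorem sum_range_chargeBound (f A : ℝ) (m : ℕ) :
    ∑ j ∈ range (m + 1), chargeBound f A (j + 1) =
      3 * f + 2 * (f + 2 * A) * (∑ j ∈ range (m + 1), 1 / ((j : ℝ) + 1) - 1) := by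
  have hsucc : ∀ j ∈ range m,
      chargeBound f A (j + 1 + 1) = 2 * (f + 2 * A) * (1 / ((j + 1 : ℕ) + 1)) := by
    intro j _
    rw [chargeBound, if_neg (by omega)]
    push_cast
    ring
  rw [sum_range_succ', sum_range_succ' (fun j : ℕ => 1 / ((j : ℝ) + 1)), sum_congr rfl hsucc,
    ← mul_sum]
  rw [show chargeBound f A (0 + 1) = 3 * f from if_pos rfl]
  push_cast
  ring

theorem one_le_sum_range_succ_one_div (m : ℕ) :
    1 ≤ ∑ j ∈ range (m + 1), 1 / ((j : ℝ) + 1) := by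
  have hrest : 0 ≤ ∑ j ∈ range m, 1 / (((j + 1 : ℕ) : ℝ) + 1) :=
    sum_nonneg fun _ _ => by positivity
  rw [sum_range_succ']
  simpa using hrest

theorem sum_le_mul_of_le_chargeBound {T : Finset ℕ} {f : ℝ} (hf : 0 ≤ f) {c e : ℕ → ℝ}
    (he : ∀ s ∈ T, 0 ≤ e s)
    (hc : ∀ s ∈ T, c s ≤ chargeBound f (∑ t ∈ T, e t) #{t ∈ T | t ≤ s} + 3 * e s) :
    ∑ s ∈ T, c s ≤ (4 * Real.logb 2 (#T + 1) + 2) * (f + ∑ s ∈ T, e s) := by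
  rcases T.eq_empty_or_nonempty with rfl | hT
  · simpa using hf
  obtain ⟨m, hm⟩ : ∃ m, #T = m + 1 := ⟨#T - 1, by have := hT.card_pos; omega⟩
  have hA : 0 ≤ ∑ t ∈ T, e t := sum_nonneg he
  have hH := one_le_sum_range_succ_one_div m
  have hHL : ∑ j ∈ range (m + 1), 1 / ((j : ℝ) + 1) ≤ Real.logb 2 (#T + 1) := by
    simpa [hm] using sum_range_one_div_le_logb (m + 1)
  calc ∑ s ∈ T, c s
      ≤ ∑ s ∈ T, (chargeBound f (∑ t ∈ T, e t) #{t ∈ T | t ≤ s} + 3 * e s) :=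
        sum_le_sum hc
    _ = 3 * f + 2 * (f + 2 * ∑ t ∈ T, e t) * (∑ j ∈ range (m + 1), 1 / ((j : ℝ) + 1) - 1)
          + 3 * ∑ t ∈ T, e t := by
        rw [sum_add_distrib, sum_card_filter_le_eq_sum_range, hm, sum_range_chargeBound,
          ← mul_sum]
    _ ≤ (4 * Real.logb 2 (#T + 1) + 2) * (f + ∑ s ∈ T, e s) := by
        nlinarith [mul_le_mul_of_nonneg_left hHL hf, mul_le_mul_of_nonneg_left hHL hA]

namespace CachingSetting

variable {X : Type*} [Fintype X] (S : CachingSetting X)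

theorem D_le_of_mem {W : Finset X} {k : X} (hk : k ∈ W) (x : X) : S.D W x ≤ S.d k x := by
  rw [D, dif_pos ⟨k, hk⟩]
  exact inf'_le _ hk

theorem D_nonneg (W : Finset X) (x : X) : 0 ≤ S.D W x := by
  unfold D
  split
  · exact le_inf' _ _ fun k _ => S.d_nonneg k x
  · exact le_rfl

theorem exists_mem_D_eq {W : Finset X} (hW : W.Nonempty) (x : X) :
    ∃ k ∈ W, S.D W x = S.d k x := by
  rw [D, dif_pos hW]
  exact exists_mem_eq_inf' hW _

theorem D_anti {W W' : Finset X} (h : W ⊆ W') (hW : W.Nonempty) (x : X) :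
    S.D W' x ≤ S.D W x := by
  obtain ⟨k, hk, hkx⟩ := S.exists_mem_D_eq hW x
  exact hkx ▸ S.D_le_of_mem (h hk) x

theorem D_le_D_add_d {W : Finset X} (hW : W.Nonempty) (y x : X) :
    S.D W x ≤ S.D W y + S.d y x := by
  obtain ⟨k, hk, hky⟩ := S.exists_mem_D_eq hW y
  calc S.D W x ≤ S.d k x := S.D_le_of_mem hk x
    _ ≤ S.d k y + S.d y x := S.d_triangle k y x
    _ = S.D W y + S.d y x := by rw [hky]

theorem pot_succ (v : ℕ → X) (W : Finset X) (j : ℕ) (k : X) :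
    S.pot v W (j + 1) k = S.pot v W j k + max (S.D W (v j) - S.d k (v j)) 0 :=
  sum_range_succ _ _

theorem pot_nonneg (v : ℕ → X) (W : Finset X) (j : ℕ) (k : X) : 0 ≤ S.pot v W j k :=
  sum_nonneg fun _ _ => le_max_right _ _

theorem D_sub_d_le_pot_succ (v : ℕ → X) (W : Finset X) (j : ℕ) (k : X) :
    S.D W (v j) - S.d k (v j) ≤ S.pot v W (j + 1) k := by
  rw [pot_succ]
  linarith [S.pot_nonneg v W j k, le_max_left (S.D W (v j) - S.d k (v j)) 0]

theorem pot_anti (v : ℕ → X) {W W' : Finset X} (h : W ⊆ W') (hW : W.Nonempty) (j : ℕ)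
    (k : X) : S.pot v W' j k ≤ S.pot v W j k :=
  sum_le_sum fun i _ => max_le_max (sub_le_sub_right (S.D_anti h hW (v i)) _) le_rfl

theorem pot_eq_zero_of_mem (v : ℕ → X) {W : Finset X} {k : X} (hk : k ∈ W) (j : ℕ) :
    S.pot v W j k = 0 :=
  sum_eq_zero fun i _ => max_eq_right (sub_nonpos.2 (S.D_le_of_mem hk (v i)))

variable [DecidableEq X]

theorem D_sub_D_insert {W : Finset X} (hW : W.Nonempty) (w x : X) :
    S.D W x - S.D (insert w W) x = max (S.D W x - S.d w x) 0 := by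
  rw [D, D, dif_pos (insert_nonempty w W), dif_pos hW, inf'_insert hW, ← max_sub_sub_left,
    sub_self]

theorem pot_eq_sum_D_sub_D_insert (v : ℕ → X) {W : Finset X} (hW : W.Nonempty) (j : ℕ)
    (w : X) : S.pot v W j w = ∑ i ∈ range j, (S.D W (v i) - S.D (insert w W) (v i)) :=
  sum_congr rfl fun i _ => (S.D_sub_D_insert hW w (v i)).symm

def cachingCost (W : Finset X) : ℝ :=
  ∑ w ∈ W.erase S.r, S.f w

theorem cachingCost_singleton_root : S.cachingCost {S.r} = 0 := by
  simp [cachingCost]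

theorem cachingCost_insert {W : Finset X} {w : X} (hw : w ∉ W) (hr : S.r ∈ W) :
    S.cachingCost (insert w W) = S.f w + S.cachingCost W := by
  rw [cachingCost, erase_insert_of_ne (ne_of_mem_of_not_mem hr hw).symm,
    sum_insert fun h => hw (mem_of_mem_erase h), cachingCost]

theorem cachingCost_eq_sum {W : Finset X} : S.cachingCost W = ∑ w ∈ W, S.f w :=
  sum_erase W S.f_root

noncomputable def charge (v : ℕ → X) (Ws : ℕ → Finset X) (k : X) (s : ℕ) : ℝ :=
  2 * S.D (Ws (s + 1)) (v s) +
    min (S.D (Ws s) (v s) - S.D (Ws (s + 1)) (v s)) (S.f k + S.d k (v s))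

namespace Step

variable {S} {v : ℕ → X} {i : ℕ} {W W' : Finset X}

theorem subset (h : S.Step v i W W') : W ⊆ W' := by
  rcases h with ⟨_, rfl⟩ | ⟨w, _, _, rfl⟩
  exacts [subset_rfl, subset_insert w W]

theorem pot_le (h : S.Step v i W W') (hW : W.Nonempty) (hinv : ∀ k, S.pot v W i k ≤ S.f k)
    (k : X) : S.pot v W' (i + 1) k ≤ S.f k := by
  rcases h with ⟨hle, rfl⟩ | ⟨w, hmax, -, rfl⟩
  · exact hle k
  have hk := hmax k
  rw [pot_succ, pot_succ, ← S.D_sub_D_insert hW w (v i)] at hk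
  have hanti := S.pot_anti v (subset_insert w W) hW i k
  rw [pot_succ, ← max_add_add_left, add_zero]
  exact max_le (by linarith [hinv w, le_max_left (S.D W (v i) - S.d k (v i)) 0])
    (hanti.trans (hinv k))

theorem pot_succ_le (h : S.Step v i W W') (hW : W.Nonempty)
    (hinv : ∀ k, S.pot v W i k ≤ S.f k) (k : X) :
    S.pot v W (i + 1) k ≤ S.f k + (S.D W (v i) - S.D W' (v i)) := by
  rcases h with ⟨hle, rfl⟩ | ⟨w, hmax, -, rfl⟩
  · linarith [hle k]
  have hw := S.pot_succ v W i w
  rw [← S.D_sub_D_insert hW w (v i)] at hw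
  linarith [hmax k, hinv w]

theorem D_le (h : S.Step v i W W') (hW : W.Nonempty) (hinv : ∀ k, S.pot v W i k ≤ S.f k)
    (k : X) : S.D W' (v i) ≤ S.f k + S.d k (v i) := by
  linarith [h.pot_succ_le hW hinv k, S.D_sub_d_le_pot_succ v W i k]

theorem card_mul_le (h : S.Step v i W W') (hW : W.Nonempty)
    (hinv : ∀ k, S.pot v W i k ≤ S.f k) (k : X) {P : Finset ℕ} (hP : ∀ s ∈ P, s ≤ i) :
    #P * (S.D W (v i) - S.d k (v i)) ≤
      S.f k + (S.D W (v i) - S.D W' (v i)) + 2 * ∑ s ∈ P, S.d k (v s) := by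
  have hterm : ∀ s ∈ P, S.D W (v i) - S.d k (v i) - 2 * S.d k (v s) ≤
      max (S.D W (v s) - S.d k (v s)) 0 := by
    intro s _
    have h₁ := S.D_le_D_add_d hW (v s) (v i)
    have h₂ := S.d_triangle (v s) k (v i)
    linarith [S.d_symm (v s) k, le_max_left (S.D W (v s) - S.d k (v s)) 0]
  have hsum := calc
    ∑ s ∈ P, (S.D W (v i) - S.d k (v i) - 2 * S.d k (v s))
        ≤ ∑ s ∈ P, max (S.D W (v s) - S.d k (v s)) 0 := sum_le_sum hterm
    _ ≤ S.pot v W (i + 1) k :=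
        sum_le_sum_of_subset_of_nonneg (fun s hs => mem_range.2 (Nat.lt_succ_of_le (hP s hs)))
          fun _ _ _ => le_max_right _ _
    _ ≤ S.f k + (S.D W (v i) - S.D W' (v i)) := h.pot_succ_le hW hinv k
  rw [sum_sub_distrib, sum_const, nsmul_eq_mul, ← mul_sum] at hsum
  linarith

theorem two_mul_D_add_min_le (h : S.Step v i W W') (hW : W.Nonempty)
    (hinv : ∀ k, S.pot v W i k ≤ S.f k) (k : X) {P : Finset ℕ} (hP : ∀ s ∈ P, s ≤ i)
    (hPne : P.Nonempty) {A : ℝ} (hA : ∑ s ∈ P, S.d k (v s) ≤ A) :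
    2 * S.D W' (v i) + min (S.D W (v i) - S.D W' (v i)) (S.f k + S.d k (v i)) ≤
      chargeBound (S.f k) A #P + 3 * S.d k (v i) := by
  have hD := h.D_le hW hinv k
  have hdk := S.d_nonneg k (v i)
  rw [chargeBound]
  split_ifs with hP1
  · linarith [min_le_right (S.D W (v i) - S.D W' (v i)) (S.f k + S.d k (v i))]
  have hP2 : (2 : ℝ) ≤ #P := by
    have := hPne.card_pos
    exact_mod_cast (show 2 ≤ #P by omega)
  have hδ : 0 ≤ S.D W (v i) - S.D W' (v i) := sub_nonneg.2 (S.D_anti h.subset hW (v i))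
  have hcard := h.card_mul_le hW hinv k hP
  have hmin := min_le_left (S.D W (v i) - S.D W' (v i)) (S.f k + S.d k (v i))
  have hmul : (2 * S.D W' (v i) + (S.D W (v i) - S.D W' (v i)) - 3 * S.d k (v i)) * #P ≤
      2 * (S.f k + 2 * A) := by
    nlinarith [mul_nonneg (sub_nonneg.2 hP2) hδ, mul_nonneg (sub_nonneg.2 hP2) hdk]
  linarith [(le_div_iff₀ (by linarith)).2 hmul]

theorem cachingCost_sub_le (h : S.Step v i W W') (hr : S.r ∈ W) (k : X) :
    S.cachingCost W' - S.cachingCost W ≤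
      ∑ s ∈ range i, (S.D W (v s) - S.D W' (v s)) +
        min (S.D W (v i) - S.D W' (v i)) (S.f k + S.d k (v i)) := by
  rcases h with ⟨-, rfl⟩ | ⟨w, hmax, hlt, rfl⟩
  · simpa using add_nonneg (S.f_nonneg k) (S.d_nonneg k (v i))
  have hW : W.Nonempty := ⟨S.r, hr⟩
  have hw : w ∉ W := fun hw => by
    linarith [S.pot_eq_zero_of_mem v hw (i + 1), S.f_nonneg w]
  have hpot := S.pot_eq_sum_D_sub_D_insert v hW (i + 1) w
  rw [sum_range_succ] at hpot
  rw [S.cachingCost_insert hw hr, add_sub_cancel_right, ← min_add_add_left]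
  refine le_min ?_ ?_
  · linarith
  · linarith [hmax k, S.D_sub_d_le_pot_succ v W i k, S.D_nonneg (insert w W) (v i)]

end Step

namespace IsExecution

variable {S} {n : ℕ} {v : ℕ → X} {Ws : ℕ → Finset X}

theorem step (h : S.IsExecution n v Ws) {i : ℕ} (hi : i < n) :
    S.Step v i (Ws i) (Ws (i + 1)) :=
  h.2 i hi

theorem root_mem (h : S.IsExecution n v Ws) {i : ℕ} (hi : i ≤ n) : S.r ∈ Ws i := by
  induction i with
  | zero => simp [h.1]
  | succ i ih => exact (h.step hi).subset (ih (by omega))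

theorem nonempty (h : S.IsExecution n v Ws) {i : ℕ} (hi : i ≤ n) : (Ws i).Nonempty :=
  ⟨S.r, h.root_mem hi⟩

theorem pot_le (h : S.IsExecution n v Ws) {i : ℕ} (hi : i ≤ n) (k : X) :
    S.pot v (Ws i) i k ≤ S.f k := by
  induction i generalizing k with
  | zero => simpa [pot] using S.f_nonneg k
  | succ i ih => exact (h.step hi).pot_le (h.nonempty (by omega)) (ih (by omega)) k

theorem cost_le_sum_charge (h : S.IsExecution n v Ws) (k : ℕ → X) :
    S.cachingCost (Ws n) + ∑ s ∈ range n, S.D (Ws (s + 1)) (v s) ≤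
      ∑ s ∈ range n, S.charge v Ws (k s) s := by
  have hcache := calc
    S.cachingCost (Ws n)
        = ∑ i ∈ range n, (S.cachingCost (Ws (i + 1)) - S.cachingCost (Ws i)) := by
          rw [sum_range_sub (fun i => S.cachingCost (Ws i)), h.1, cachingCost_singleton_root,
            sub_zero]
    _ ≤ ∑ i ∈ range n, (∑ s ∈ range i, (S.D (Ws i) (v s) - S.D (Ws (i + 1)) (v s)) +
          min (S.D (Ws i) (v i) - S.D (Ws (i + 1)) (v i)) (S.f (k i) + S.d (k i) (v i))) :=
        sum_le_sum fun i hi =>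
          (h.step (mem_range.1 hi)).cachingCost_sub_le (h.root_mem (mem_range.1 hi).le) (k i)
  -- the savings that opened caches bring to earlier requests telescope
  have hsaving :
      ∑ i ∈ range n, ∑ s ∈ range i, (S.D (Ws i) (v s) - S.D (Ws (i + 1)) (v s)) ≤
        ∑ s ∈ range n, S.D (Ws (s + 1)) (v s) := by
    rw [sum_range_sum_range_sub (fun i s => S.D (Ws i) (v s))]
    exact sum_le_sum fun s _ => sub_le_self _ (S.D_nonneg _ _)
  simp only [charge, sum_add_distrib, ← mul_sum] at hcache ⊢
  linarith

theorem sum_charge_le (h : S.IsExecution n v Ws) (k : X) {T : Finset ℕ}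
    (hT : ∀ s ∈ T, s < n) :
    ∑ s ∈ T, S.charge v Ws k s ≤
      (4 * Real.logb 2 (#T + 1) + 2) * (S.f k + ∑ s ∈ T, S.d k (v s)) :=
  sum_le_mul_of_le_chargeBound (S.f_nonneg k) (fun s _ => S.d_nonneg k (v s)) fun s hs =>
    (h.step (hT s hs)).two_mul_D_add_min_le (h.nonempty (hT s hs).le)
      (h.pot_le (hT s hs).le) k (fun _ ht => (mem_filter.1 ht).2)
      ⟨s, mem_filter.2 ⟨hs, le_rfl⟩⟩
      (sum_le_sum_of_subset_of_nonneg (filter_subset _ _) fun _ _ _ => S.d_nonneg _ _)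

theorem cost_le (h : S.IsExecution n v Ws) {Wstar : Finset X} (hr : S.r ∈ Wstar) :
    S.cachingCost (Ws n) + ∑ s ∈ range n, S.D (Ws (s + 1)) (v s) ≤
      (4 * Real.logb 2 (n + 1) + 2) *
        (S.cachingCost Wstar + ∑ s ∈ range n, S.D Wstar (v s)) := by
  choose c hc hcd using fun s => S.exists_mem_D_eq ⟨S.r, hr⟩ (v s)
  have hcluster (k : X) : ∑ s ∈ range n with c s = k, S.charge v Ws k s ≤
      (4 * Real.logb 2 (n + 1) + 2) *
        (S.f k + ∑ s ∈ range n with c s = k, S.D Wstar (v s)) := by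
    set T := {s ∈ range n | c s = k}
    have hcard : (#T : ℝ) + 1 ≤ n + 1 := by
      have : #T ≤ n := (card_filter_le _ _).trans (card_range n).le
      exact_mod_cast Nat.add_le_add_right this 1
    calc ∑ s ∈ T, S.charge v Ws k s
        ≤ (4 * Real.logb 2 (#T + 1) + 2) * (S.f k + ∑ s ∈ T, S.d k (v s)) :=
          h.sum_charge_le k fun s hs => mem_range.1 (mem_filter.1 hs).1
      _ = (4 * Real.logb 2 (#T + 1) + 2) * (S.f k + ∑ s ∈ T, S.D Wstar (v s)) := by
          rw [sum_congr rfl fun s hs => (mem_filter.1 hs).2 ▸ (hcd s).symm]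
      _ ≤ (4 * Real.logb 2 (n + 1) + 2) * (S.f k + ∑ s ∈ T, S.D Wstar (v s)) := by
          refine mul_le_mul_of_nonneg_right ?_
            (add_nonneg (S.f_nonneg k) (sum_nonneg fun s _ => S.D_nonneg _ _))
          linarith [Real.logb_le_logb_of_le one_lt_two (by positivity) hcard]
  calc S.cachingCost (Ws n) + ∑ s ∈ range n, S.D (Ws (s + 1)) (v s)
      ≤ ∑ s ∈ range n, S.charge v Ws (c s) s := h.cost_le_sum_charge c
    _ = ∑ k ∈ Wstar, ∑ s ∈ range n with c s = k, S.charge v Ws k s := by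
        rw [← sum_fiberwise_of_maps_to fun s _ => hc s]
        exact sum_congr rfl fun k _ => sum_congr rfl fun s hs => by rw [(mem_filter.1 hs).2]
    _ ≤ ∑ k ∈ Wstar, (4 * Real.logb 2 (n + 1) + 2) *
          (S.f k + ∑ s ∈ range n with c s = k, S.D Wstar (v s)) :=
        sum_le_sum fun k _ => hcluster k
    _ = (4 * Real.logb 2 (n + 1) + 2) *
          (S.cachingCost Wstar + ∑ s ∈ range n, S.D Wstar (v s)) := by
        rw [← mul_sum, sum_add_distrib, sum_fiberwise_of_maps_to fun s _ => hc s,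
          cachingCost_eq_sum]

end IsExecution

end CachingSetting

/-- Theorem 2 of the paper: the online algorithm is `(4 log₂(n+1) + 2)`-competitive.
In every execution on requests `v 0, …, v (n-1)` (`n ≥ 1`), the total cost paid by
the algorithm — the caching cost of the final cache set `Ws n` plus the UA cost
`∑_j d(W_{v_j}, v_j)`, where `W_{v_j} = Ws (j+1)` is the cache set when `v j` is
assigned — is at most `(4 log₂(n+1) + 2) · C*`, where `C*` is the minimum offline
cost over all cache sets `W*` containing the root `r`. -/
theorem caching_competitive_ratio {X : Type*} [Fintype X] [DecidableEq X]
    (S : CachingSetting X) (n : ℕ) (v : ℕ → X) (Ws : ℕ → Finset X)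
    (hexec : S.IsExecution n v Ws) :
    ∑ w ∈ (Ws n).erase S.r, S.f w + ∑ j ∈ Finset.range n, S.D (Ws (j + 1)) (v j) ≤
      (4 * Real.logb 2 ((n : ℝ) + 1) + 2) *
        ((Finset.univ.powerset.filter fun Wstar : Finset X => S.r ∈ Wstar).inf'
          ⟨{S.r}, by simp⟩
          fun Wstar =>
            ∑ w ∈ Wstar.erase S.r, S.f w + ∑ j ∈ Finset.range n, S.D Wstar (v j)) := by
  obtain ⟨Wstar, hWstar, hopt⟩ := exists_mem_eq_inf' (s := {W ∈ univ.powerset | S.r ∈ W})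
    ⟨{S.r}, by simp⟩
    fun Wstar => ∑ w ∈ Wstar.erase S.r, S.f w + ∑ j ∈ range n, S.D Wstar (v j)
  rw [hopt]
  exact hexec.cost_le (mem_filter.1 hWstar).2
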